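/- Fix n ≥ 1. If f ∈ F_X leans right at n, and σ is τ_i or τ_i^{-1} for some i ≥ 1 with σ ≠ τ_n^{-1}, then σ(f) also leans right at n. -/

import Mathlib

/-- The automorphism `τ_i` (as an endomorphism of the free group `F_X` on
`x_0, x_1, …`, given by its values on the generators, for `i ≥ 1`):
`x_i ↦ x_{i+1} · x_i⁻¹ · x_{i-1}` and `x_j ↦ x_j` for `j ≠ i`. -/
def tauHom (i : ℕ) : FreeGroup ℕ →* FreeGroup ℕ :=
  FreeGroup.lift fun j =>
    if j = i then FreeGroup.of (i + 1) * (FreeGroup.of i)⁻¹ * FreeGroup.of (i - 1)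
    else FreeGroup.of j

/-- The inverse automorphism `τ_i⁻¹`: `x_i ↦ x_{i-1} · x_i⁻¹ · x_{i+1}` and
`x_j ↦ x_j` for `j ≠ i`. -/
def tauInvHom (i : ℕ) : FreeGroup ℕ →* FreeGroup ℕ :=
  FreeGroup.lift fun j =>
    if j = i then FreeGroup.of (i - 1) * (FreeGroup.of i)⁻¹ * FreeGroup.of (i + 1)
    else FreeGroup.of j

/-- The reduced word of `f` leans right at `n`: it begins either with a letter `x_m`
(positively) for some `m > n`, or with `x_n` (positively) followed by `x_m⁻¹` for
some `m > n`. -/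
def LeansRight (n : ℕ) (f : FreeGroup ℕ) : Prop :=
  (∃ m : ℕ, n < m ∧ f.toWord.head? = some (m, true)) ∨
  (∃ m : ℕ, n < m ∧ f.toWord.take 2 = [(n, true), (m, false)])

/-
Both `τ_i` and `τ_i⁻¹` substitute `x_i ↦ x_p x_i⁻¹ x_q` with `{p, q} = {i - 1, i + 1}`. In the
image of a reduced word the only cancellations are of an outer letter of a block `x_p x_i⁻¹ x_q`
(or of its inverse) against an adjacent unsubstituted letter, so the middle letter of every block
survives. Hence the reduced image begins as dictated by the first two letters of the word:
`x_i^ε` gives `x_p x_i⁻¹` resp. `x_q⁻¹ x_i`, the pairs `x_p⁻¹ x_i` and `x_q x_i⁻¹` give `x_i⁻¹`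
resp. `x_i`, and any other first letter survives. Running the two shapes of a word leaning right
at `n` through these rules proves the theorem; `τ_n⁻¹` has to be excluded because it sends `x_n`
to `x_{n-1} x_n⁻¹ x_{n+1}`.
-/

theorem Bool.cond_ne_of_ne {α : Type*} {i p q : α} (hp : p ≠ i) (hq : q ≠ i) (ε : Bool) :
    cond ε p q ≠ i := by
  cases ε <;> assumption

namespace FreeGroup

variable {α : Type*}

theorem mk_singleton_true (x : α) : mk [(x, true)] = of x := rfl

theorem mk_singleton_false (x : α) : mk [(x, false)] = (of x)⁻¹ := by
  simp [of, inv_mk, invRev]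

theorem IsReduced.of_cons {a : α × Bool} {t : List (α × Bool)} (h : IsReduced (a :: t)) :
    IsReduced t :=
  h.infix (List.suffix_cons a t).isInfix

variable [DecidableEq α]

theorem toWord_mk_singleton_mul_of_toWord_eq {a : α × Bool} {g : FreeGroup α}
    {t : List (α × Bool)} (h : g.toWord = (a.1, !a.2) :: t) : (mk [a] * g).toWord = t := by
  rw [toWord_mul, toWord_mk, reduce_singleton, List.singleton_append, reduce.cons,
    reduce_toWord, h]
  simp

theorem toWord_mk_singleton_mul_of_head?_ne {a : α × Bool} {g : FreeGroup α}
    (h : g.toWord.head? ≠ some (a.1, !a.2)) : (mk [a] * g).toWord = a :: g.toWord := by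
  rw [toWord_mul, toWord_mk, reduce_singleton, List.singleton_append, reduce.cons, reduce_toWord]
  match g.toWord, h with
  | [], _ => rfl
  | b :: t, h =>
    have hb : ¬(a.1 = b.1 ∧ a.2 = !b.2) := by
      rintro ⟨h1, h2⟩
      exact h (by simp [h1, h2])
    simp [hb]

/-- `τ_i = substHom i (i + 1) (i - 1)` and `τ_i⁻¹ = substHom i (i - 1) (i + 1)`. -/
def substHom (i p q : α) : FreeGroup α →* FreeGroup α :=
  FreeGroup.lift fun j => if j = i then of p * (of i)⁻¹ * of q else of j

def imageWord (i p q : α) (t : List (α × Bool)) : List (α × Bool) :=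
  (substHom i p q (mk t)).toWord

/-- The first two letters of the image of the letter `(i, ε)`. -/
def blockPrefix (i p q : α) (ε : Bool) : List (α × Bool) := [(cond ε p q, ε), (i, !ε)]

/-- The beginning of the reduced image of a reduced word, read off from its first two letters:
a letter `p⁻¹` before `x_i`, or `q` before `x_i⁻¹`, cancels against the image of `x_i^{±1}`. -/
def imagePrefix (i p q : α) : List (α × Bool) → List (α × Bool)
  | [] => []
  | [a] => if a.1 = i then blockPrefix i p q a.2 else [a]
  | a :: b :: _ =>
    if a.1 = i then blockPrefix i p q a.2
    else if b.1 = i ∧ a = (cond b.2 p q, !b.2) then [(i, !b.2)] else [a]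

section substHom

variable {i p q : α}

theorem substHom_mk_singleton_of_ne {a : α × Bool} (ha : a.1 ≠ i) :
    substHom i p q (mk [a]) = mk [a] := by
  obtain ⟨j, _ | _⟩ := a <;> simp_all [substHom, mk_singleton_true, mk_singleton_false]

theorem substHom_mk_singleton_self (ε : Bool) :
    substHom i p q (mk [(i, ε)]) =
      mk [(cond ε p q, ε)] * (mk [(i, !ε)] * mk [(cond ε q p, ε)]) := by
  cases ε <;> simp [substHom, mul_assoc, mk_singleton_true, mk_singleton_false]

@[simp]
theorem imageWord_nil : imageWord i p q [] = [] := by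
  rw [imageWord, ← one_eq_mk, _root_.map_one, toWord_one]

theorem imageWord_toWord (f : FreeGroup α) :
    imageWord i p q f.toWord = (substHom i p q f).toWord := by
  rw [imageWord, mk_toWord]

theorem imageWord_cons (a : α × Bool) (t : List (α × Bool)) :
    imageWord i p q (a :: t) = (substHom i p q (mk [a]) * substHom i p q (mk t)).toWord := by
  rw [imageWord, ← _root_.map_mul, mul_mk, List.singleton_append]

theorem imageWord_cons_of_ne {a : α × Bool} {t : List (α × Bool)} (ha : a.1 ≠ i)
    (h : (imageWord i p q t).head? ≠ some (a.1, !a.2)) :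
    imageWord i p q (a :: t) = a :: imageWord i p q t := by
  rw [imageWord_cons, substHom_mk_singleton_of_ne ha, toWord_mk_singleton_mul_of_head?_ne h]
  rfl

theorem imageWord_cons_of_ne_of_eq {a : α × Bool} {t r : List (α × Bool)} (ha : a.1 ≠ i)
    (h : imageWord i p q t = (a.1, !a.2) :: r) : imageWord i p q (a :: t) = r := by
  rw [imageWord_cons, substHom_mk_singleton_of_ne ha, toWord_mk_singleton_mul_of_toWord_eq h]

theorem blockPrefix_prefix_imageWord_cons_self (hp : p ≠ i) (hq : q ≠ i) {ε : Bool}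
    {t : List (α × Bool)} (h : ¬ blockPrefix i p q (!ε) <+: imageWord i p q t) :
    blockPrefix i p q ε <+: imageWord i p q ((i, ε) :: t) := by
  rw [imageWord_cons, substHom_mk_singleton_self, mul_assoc, mul_assoc]
  set g := substHom i p q (mk t)
  -- the last letter of the block may cancel, but then `h` keeps the middle letter alive
  have hg : (mk [(cond ε q p, ε)] * g).toWord.head? ≠ some (i, !!ε) := by
    by_cases hc : g.toWord.head? = some (cond ε q p, !ε)
    · obtain ⟨r, hr⟩ : ∃ r, g.toWord = (cond ε q p, !ε) :: r := by
        rcases hw : g.toWord with _ | ⟨b, r⟩ <;> simp_all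
      rw [toWord_mk_singleton_mul_of_toWord_eq hr]
      intro hr'
      apply h
      rcases r with _ | ⟨c, r⟩ <;> simp_all [blockPrefix, imageWord, g]
    · rw [toWord_mk_singleton_mul_of_head?_ne hc]
      simpa using Bool.cond_ne_of_ne hq hp ε
  rw [toWord_mk_singleton_mul_of_head?_ne, toWord_mk_singleton_mul_of_head?_ne (a := (i, !ε)) hg]
  · simp [blockPrefix]
  · rw [toWord_mk_singleton_mul_of_head?_ne (a := (i, !ε)) hg]
    simpa using (Bool.cond_ne_of_ne hp hq ε).symm

theorem imagePrefix_cons_ne_nil (a : α × Bool) (t : List (α × Bool)) :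
    imagePrefix i p q (a :: t) ≠ [] := by
  rcases t with _ | ⟨b, t⟩ <;> simp only [imagePrefix] <;> split_ifs <;> simp [blockPrefix]

theorem imagePrefix_cons_self (ε : Bool) (t : List (α × Bool)) :
    imagePrefix i p q ((i, ε) :: t) = blockPrefix i p q ε := by
  rcases t with _ | ⟨b, t⟩ <;> simp [imagePrefix]

theorem head?_imagePrefix_cons {a e : α × Bool} {t : List (α × Bool)}
    (he : (imagePrefix i p q (a :: t)).head? = some e) :
    (a.1 ≠ i ∧ e = a) ∨ (a.1 = i ∧ e = (cond a.2 p q, a.2)) ∨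
      (e.1 = i ∧ a = (cond (!e.2) p q, e.2)) := by
  rcases t with _ | ⟨b, t⟩ <;> simp only [imagePrefix] at he <;> split_ifs at he
  · simp_all [blockPrefix]
  · simp_all
  · simp_all [blockPrefix]
  · obtain ⟨-, rfl⟩ := ‹_ ∧ _›
    cases he
    simp
  · simp_all

theorem head?_imageWord_cons {a e : α × Bool} {t : List (α × Bool)}
    (H : imagePrefix i p q (a :: t) <+: imageWord i p q (a :: t))
    (he : (imageWord i p q (a :: t)).head? = some e) :
    (a.1 ≠ i ∧ e = a) ∨ (a.1 = i ∧ e = (cond a.2 p q, a.2)) ∨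
      (e.1 = i ∧ a = (cond (!e.2) p q, e.2)) := by
  obtain ⟨r, hr⟩ := H
  rw [← hr, List.head?_append_of_ne_nil _ (imagePrefix_cons_ne_nil a t)] at he
  exact head?_imagePrefix_cons he

theorem imageWord_cons_of_ne_of_isReduced {a : α × Bool} {t : List (α × Bool)}
    (h : IsReduced (a :: t)) (ha : a.1 ≠ i)
    (hcancel : ∀ c s, t = (i, c) :: s → a ≠ (cond c p q, !c))
    (H : imagePrefix i p q t <+: imageWord i p q t) :
    imageWord i p q (a :: t) = a :: imageWord i p q t := by
  refine imageWord_cons_of_ne ha fun he => ?_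
  rcases t with _ | ⟨b, s⟩
  · simp at he
  rcases head?_imageWord_cons H he with ⟨-, rfl⟩ | ⟨hb, hab⟩ | ⟨hai, -⟩
  · simp at h
  · obtain ⟨b1, b2⟩ := b
    simp only [Prod.mk.injEq] at hb hab
    subst hb
    exact hcancel b2 s rfl (by rw [← hab.1, ← hab.2, Bool.not_not])
  · exact ha hai

theorem prefix_imageWord_cons_cancel (hp : p ≠ i) (hq : q ≠ i) {c : Bool}
    {t : List (α × Bool)} (H : blockPrefix i p q c <+: imageWord i p q t) :
    [(i, !c)] <+: imageWord i p q ((cond c p q, !c) :: t) := by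
  obtain ⟨r, hr⟩ := H
  rw [imageWord_cons_of_ne_of_eq (Bool.cond_ne_of_ne hp hq c) (r := (i, !c) :: r)]
  · simp
  · simp [← hr, blockPrefix]

theorem eq_of_blockPrefix_prefix_imageWord (hp : p ≠ i) (hq : q ≠ i) (hpq : p ≠ q)
    {b : α × Bool} {t : List (α × Bool)} {δ : Bool} (h : IsReduced (b :: t))
    (H₁ : imagePrefix i p q (b :: t) <+: imageWord i p q (b :: t))
    (H₂ : imagePrefix i p q t <+: imageWord i p q t)
    (hδ : blockPrefix i p q δ <+: imageWord i p q (b :: t)) : b = (i, δ) := by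
  obtain ⟨r, hr⟩ := hδ
  have hhead : (imageWord i p q (b :: t)).head? = some (cond δ p q, δ) := by
    simp [← hr, blockPrefix]
  rcases head?_imageWord_cons H₁ hhead with ⟨hb, rfl⟩ | ⟨hb, he⟩ | ⟨he, -⟩
  · have hcancel : ∀ c s, t = (i, c) :: s → (cond δ p q, δ) ≠ (cond c p q, !c) := by
      rintro c s - he
      cases δ <;> cases c <;> simp_all
    rw [imageWord_cons_of_ne_of_isReduced h hb hcancel H₂] at hr
    have hti : (imageWord i p q t).head? = some (i, !δ) := by
      simp only [blockPrefix, List.cons_append, List.nil_append, List.cons.injEq] at hr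
      rw [← hr.2]
      rfl
    rcases t with _ | ⟨c, s⟩
    · simp at hti
    rcases head?_imageWord_cons H₂ hti with ⟨hc, rfl⟩ | ⟨-, hc⟩ | ⟨-, rfl⟩
    · exact (hc rfl).elim
    · exact (Bool.cond_ne_of_ne hp hq c.2 (Prod.mk.inj hc).1.symm).elim
    · simp at h
  · obtain ⟨b1, b2⟩ := b
    simp_all
  · exact absurd he (Bool.cond_ne_of_ne hp hq δ)

theorem imagePrefix_prefix_imageWord (hp : p ≠ i) (hq : q ≠ i) (hpq : p ≠ q) :
    ∀ {t : List (α × Bool)}, IsReduced t → imagePrefix i p q t <+: imageWord i p q t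
  | [], _ => by simp [imagePrefix]
  | [a], h => by
    by_cases ha : a.1 = i
    · obtain ⟨a1, ε⟩ := a
      simp only at ha
      subst ha
      rw [imagePrefix_cons_self]
      exact blockPrefix_prefix_imageWord_cons_self hp hq (by simp [blockPrefix])
    · rw [imageWord_cons_of_ne_of_isReduced h ha (by simp) (by simp [imagePrefix])]
      simp [imagePrefix, ha]
  | a :: b :: t, h => by
    have H₁ := imagePrefix_prefix_imageWord hp hq hpq h.of_cons
    have H₂ := imagePrefix_prefix_imageWord hp hq hpq h.of_cons.of_cons
    by_cases ha : a.1 = i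
    · obtain ⟨a1, ε⟩ := a
      simp only at ha
      subst ha
      rw [imagePrefix_cons_self]
      refine blockPrefix_prefix_imageWord_cons_self hp hq fun hbad => ?_
      obtain rfl := eq_of_blockPrefix_prefix_imageWord hp hq hpq h.of_cons H₁ H₂ hbad
      simp at h
    by_cases hcancel : b.1 = i ∧ a = (cond b.2 p q, !b.2)
    · obtain ⟨hb, rfl⟩ := hcancel
      obtain ⟨b1, c⟩ := b
      simp only at hb
      subst hb
      rw [imagePrefix_cons_self] at H₁
      simpa [imagePrefix, ha] using prefix_imageWord_cons_cancel hp hq H₁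
    · rw [imageWord_cons_of_ne_of_isReduced h ha _ H₁]
      · simp [imagePrefix, ha, hcancel]
      · rintro c s hs rfl
        simp_all

end substHom

end FreeGroup

open FreeGroup

theorem leansRight_of_prefix {n m : ℕ} {g : FreeGroup ℕ} (hm : n < m)
    (h : [(m, true)] <+: g.toWord) : LeansRight n g :=
  Or.inl ⟨m, hm, List.singleton_prefix_iff_head?_eq_some.1 h⟩

theorem leansRight_of_pair_prefix {n m : ℕ} {g : FreeGroup ℕ} (hm : n < m)
    (h : [(n, true), (m, false)] <+: g.toWord) : LeansRight n g := by
  obtain ⟨r, hr⟩ := h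
  exact Or.inr ⟨m, hm, by simp [← hr]⟩

theorem leansRight_of_blockPrefix {n i p q : ℕ} (hp : n ≤ p) (hi : p = n → n < i)
    {g : FreeGroup ℕ} (h : blockPrefix i p q true <+: g.toWord) : LeansRight n g := by
  rcases hp.lt_or_eq with hp | rfl
  · exact leansRight_of_prefix hp (List.IsPrefix.trans (by simp [blockPrefix]) h)
  · exact leansRight_of_pair_prefix (hi rfl) h

theorem leansRight_substHom_of_toWord_eq_cons {n i p q m : ℕ} (hi : 1 ≤ i)
    (hpq : (p = i + 1 ∧ q = i - 1) ∨ (p = i - 1 ∧ q = i + 1 ∧ i ≠ n)) (hm : n < m)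
    {f : FreeGroup ℕ} {t : List (ℕ × Bool)} (hf : f.toWord = (m, true) :: t) :
    LeansRight n (substHom i p q f) := by
  have H : imagePrefix i p q ((m, true) :: t) <+: (substHom i p q f).toWord := by
    rw [← imageWord_toWord, hf]
    exact imagePrefix_prefix_imageWord (by omega) (by omega) (by omega) (hf ▸ isReduced_toWord)
  rcases t with _ | ⟨⟨b, c⟩, t⟩ <;> simp only [imagePrefix] at H <;> split_ifs at H
  · exact leansRight_of_blockPrefix (by omega) (fun _ => by omega) H
  · exact leansRight_of_prefix hm H
  · exact leansRight_of_blockPrefix (by omega) (fun _ => by omega) H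
  · obtain ⟨rfl, hc⟩ := ‹_ ∧ _›
    cases c <;> simp at hc
    exact leansRight_of_prefix (by omega) H
  · exact leansRight_of_prefix hm H

theorem leansRight_of_toWord_eq_cons_imageWord {n i p q m : ℕ} (hi : 1 ≤ i)
    (hpq : (p = i + 1 ∧ q = i - 1) ∨ (p = i - 1 ∧ q = i + 1 ∧ i ≠ n)) (hm : n < m)
    (hni : n ≠ i) (hnq : ¬(m = i ∧ n = q)) {g : FreeGroup ℕ} {t : List (ℕ × Bool)}
    (hred : IsReduced ((m, false) :: t))
    (hg : g.toWord = (n, true) :: imageWord i p q ((m, false) :: t)) : LeansRight n g := by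
  have H := imagePrefix_prefix_imageWord (i := i) (p := p) (q := q) (by omega) (by omega)
    (by omega) hred
  have hnext : ∀ k, n < k → [(k, false)] <+: imageWord i p q ((m, false) :: t) →
      LeansRight n g := fun k hk h =>
    leansRight_of_pair_prefix hk (hg ▸ List.cons_prefix_cons.2 ⟨rfl, h⟩)
  rcases t with _ | ⟨⟨b, c⟩, t⟩ <;> simp only [imagePrefix] at H <;> split_ifs at H
  · exact hnext q (by omega) (List.IsPrefix.trans (by simp [blockPrefix]) H)
  · exact hnext m hm H
  · exact hnext q (by omega) (List.IsPrefix.trans (by simp [blockPrefix]) H)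
  · obtain ⟨rfl, hc⟩ := ‹_ ∧ _›
    cases c <;> simp at hc
    exact hnext b (by omega) H
  · exact hnext m hm H

theorem leansRight_substHom_of_toWord_eq_cons_cons {n i p q m : ℕ} (hi : 1 ≤ i)
    (hpq : (p = i + 1 ∧ q = i - 1) ∨ (p = i - 1 ∧ q = i + 1 ∧ i ≠ n)) (hm : n < m)
    {f : FreeGroup ℕ} {t : List (ℕ × Bool)} (hf : f.toWord = (n, true) :: (m, false) :: t) :
    LeansRight n (substHom i p q f) := by
  obtain ⟨hp, hq, hpq'⟩ : p ≠ i ∧ q ≠ i ∧ p ≠ q := by omega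
  have hred : IsReduced ((n, true) :: (m, false) :: t) := hf ▸ isReduced_toWord
  have hw : (substHom i p q f).toWord = imageWord i p q ((n, true) :: (m, false) :: t) := by
    rw [← hf, imageWord_toWord]
  have H := imagePrefix_prefix_imageWord hp hq hpq' hred
  rw [← hw] at H
  simp only [imagePrefix] at H
  split_ifs at H with hni hcancel
  · exact leansRight_of_blockPrefix (by omega) (fun _ => by omega) H
  · obtain ⟨rfl, -⟩ := hcancel
    exact leansRight_of_prefix (by omega) H
  simp only [cond_false, Bool.not_false, Prod.mk.injEq, and_true] at hcancel
  refine leansRight_of_toWord_eq_cons_imageWord hi hpq hm hni hcancel hred.of_cons ?_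
  rw [hw, imageWord_cons_of_ne_of_isReduced hred hni ?_
    (imagePrefix_prefix_imageWord hp hq hpq' hred.of_cons)]
  rintro c s hs hc
  obtain ⟨⟨rfl, rfl⟩, -⟩ := List.cons.inj hs
  exact hcancel ⟨rfl, (Prod.mk.inj hc).1⟩

theorem tau_preserves_leansRight_general
    (n : ℕ) (f : FreeGroup ℕ) (hf : LeansRight n f)
    (i : ℕ) (hi : 1 ≤ i) (σ : FreeGroup ℕ →* FreeGroup ℕ)
    (hσ : σ = tauHom i ∨ σ = tauInvHom i) (hσn : σ ≠ tauInvHom n) :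
    LeansRight n (σ f) := by
  obtain ⟨p, q, hpq, rfl⟩ : ∃ p q, ((p = i + 1 ∧ q = i - 1) ∨ (p = i - 1 ∧ q = i + 1 ∧ i ≠ n)) ∧
      σ = substHom i p q := by
    rcases hσ with rfl | rfl
    · exact ⟨_, _, Or.inl ⟨rfl, rfl⟩, rfl⟩
    · exact ⟨_, _, Or.inr ⟨rfl, rfl, fun h => hσn (by rw [h])⟩, rfl⟩
  rcases hf with ⟨m, hm, hhead⟩ | ⟨m, hm, htake⟩
  · obtain ⟨t, ht⟩ := List.head?_eq_some_iff.1 hhead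
    exact leansRight_substHom_of_toWord_eq_cons hi hpq hm ht
  · have ht : f.toWord = (n, true) :: (m, false) :: f.toWord.drop 2 := by
      conv_lhs => rw [← List.take_append_drop 2 f.toWord, htake]
      rfl
    exact leansRight_substHom_of_toWord_eq_cons_cons hi hpq hm ht

/-- If `f` leans right at `n ≥ 1` and `σ` is `τ_i` or `τ_i⁻¹` for some `i ≥ 1` with
`σ ≠ τ_n⁻¹`, then `σ(f)` also leans right at `n`. -/
theorem tau_preserves_leansRight
    (n : ℕ) (hn : 1 ≤ n) (f : FreeGroup ℕ) (hf : LeansRight n f)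
    (i : ℕ) (hi : 1 ≤ i) (σ : FreeGroup ℕ →* FreeGroup ℕ)
    (hσ : σ = tauHom i ∨ σ = tauInvHom i) (hσn : σ ≠ tauInvHom n) :
    LeansRight n (σ f) :=
  tau_preserves_leansRight_general n f hf i hi σ hσ hσn
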